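/- arXiv:2403.07143 — 2 statements merged into one kernel-verified Lean document; each statement's English description precedes it below -/
import Mathlib

section
/- (Contracting–pricing reduction) Let $D:[0,1]\to[0,1]$ be a strictly decreasing, continuous demand curve. Define the cost function $c(a) = \int_0^a [1 - D^{-1}(x)]\,dx$ on the range of $D$. Then $c$ is convex, and for any $\alpha \in [0,1]$, the agent's best response to the linear contract keeping fraction $\alpha$ for the principal (i.e., maximizing $(1-\alpha) a - c(a)$ over $a$) equals $D(\alpha)$; consequently the principal's expected utility $\alpha \cdot a(\alpha)$ equals the seller's revenue $p \cdot D(p)$ at price $p = \alpha$. -/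
/-! With marginal cost `g := 1 - Dinv`, which is monotone, the cost `c` is a primitive of `g`,
hence convex. Since `g (D α) = 1 - α`, the agent's net gain from moving from `a` to `D α` is
`∫ x in a..D α, (g (D α) - g x)`, which is nonnegative on either side of `D α` by monotonicity of `g`.
So `D α` is a best response and the principal's utility is the revenue at price `α`. -/

open Set intervalIntegral

namespace MonotoneOn

variable {g : ℝ → ℝ} {l u : ℝ}

theorem intervalIntegrable_of_le (hg : MonotoneOn g (Icc l u)) (hlu : l ≤ u) :
    IntervalIntegrable g MeasureTheory.volume l u :=
  (hg.mono (uIcc_of_le hlu).subset).intervalIntegrable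

theorem intervalIntegral_le_mul (hg : MonotoneOn g (Icc l u)) (hlu : l ≤ u) :
    ∫ x in l..u, g x ≤ (u - l) * g u := by
  calc ∫ x in l..u, g x ≤ ∫ _ in l..u, g u :=
        integral_mono_on hlu (hg.intervalIntegrable_of_le hlu) intervalIntegrable_const
          fun x hx => hg hx (right_mem_Icc.2 hlu) hx.2
    _ = (u - l) * g u := by rw [integral_const, smul_eq_mul]

theorem mul_le_intervalIntegral (hg : MonotoneOn g (Icc l u)) (hlu : l ≤ u) :
    (u - l) * g l ≤ ∫ x in l..u, g x := by
  calc (u - l) * g l = ∫ _ in l..u, g l := by rw [integral_const, smul_eq_mul]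
    _ ≤ ∫ x in l..u, g x :=
        integral_mono_on hlu intervalIntegrable_const (hg.intervalIntegrable_of_le hlu)
          fun x hx => hg (left_mem_Icc.2 hlu) hx hx.1

theorem intervalIntegral_sub_intervalIntegral {a b : ℝ} (hg : MonotoneOn g (Icc l u)) (ha : a ∈ Icc l u)
    (hb : b ∈ Icc l u) :
    (∫ x in l..b, g x) - ∫ x in l..a, g x = ∫ x in a..b, g x :=
  have hl : l ∈ Icc l u := left_mem_Icc.2 (ha.1.trans ha.2)
  integral_interval_sub_left (hg.mono (uIcc_subset_Icc hl hb)).intervalIntegrable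
    (hg.mono (uIcc_subset_Icc hl ha)).intervalIntegrable

theorem convexOn_primitive (hg : MonotoneOn g (Icc l u)) :
    ConvexOn ℝ (Icc l u) fun a => ∫ x in l..a, g x := by
  -- both slopes adjacent to `y` are compared with `g y`
  refine convexOn_of_slope_mono_adjacent (convex_Icc l u) fun {x y z} hx hz hxy hyz => ?_
  have hy : y ∈ Icc l u := ⟨hx.1.trans hxy.le, hyz.le.trans hz.2⟩
  rw [hg.intervalIntegral_sub_intervalIntegral hx hy, hg.intervalIntegral_sub_intervalIntegral hy hz,
    div_le_div_iff₀ (sub_pos.2 hxy) (sub_pos.2 hyz)]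
  have hleft := (hg.mono (Icc_subset_Icc hx.1 hy.2)).intervalIntegral_le_mul hxy.le
  have hright := (hg.mono (Icc_subset_Icc hy.1 hz.2)).mul_le_intervalIntegral hyz.le
  linarith [mul_le_mul_of_nonneg_right hleft (sub_pos.2 hyz).le,
    mul_le_mul_of_nonneg_right hright (sub_pos.2 hxy).le]

theorem isMaxOn_sub_primitive (hg : MonotoneOn g (Icc l u)) {b : ℝ} (hb : b ∈ Icc l u) :
    IsMaxOn (fun a => g b * a - ∫ x in l..a, g x) (Icc l u) b := by
  intro a ha
  simp only [mem_ofPred_eq]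
  rcases le_total a b with hab | hba
  · have := (hg.mono (Icc_subset_Icc ha.1 hb.2)).intervalIntegral_le_mul hab
    linarith [hg.intervalIntegral_sub_intervalIntegral ha hb]
  · have := (hg.mono (Icc_subset_Icc hb.1 ha.2)).mul_le_intervalIntegral hba
    linarith [hg.intervalIntegral_sub_intervalIntegral hb ha]

end MonotoneOn

theorem contracting_pricing_reduction_general
    (D Dinv : ℝ → ℝ)
    (hDrange : ∀ p ∈ Set.Icc (0:ℝ) 1, D p ∈ Set.Icc (0:ℝ) 1)
    (hDinv : ∀ p ∈ Set.Icc (0:ℝ) 1, Dinv (D p) = p)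
    (hDinvAnti : AntitoneOn Dinv (Set.Icc 0 1))
    (c : ℝ → ℝ) (hc : ∀ a, c a = ∫ x in (0:ℝ)..a, (1 - Dinv x)) :
    ConvexOn ℝ (Set.Icc 0 1) c ∧
    ∃ A : ℝ → ℝ, ∀ α ∈ Set.Icc (0:ℝ) 1,
      IsMaxOn (fun a => (1 - α) * a - c a) (Set.Icc (0:ℝ) 1) (A α) ∧
      A α = D α ∧
      α * A α = α * D α := by
  have hmarginal : MonotoneOn (fun x => 1 - Dinv x) (Icc 0 1) :=
    fun x hx y hy hxy => sub_le_sub_left (hDinvAnti hx hy hxy) 1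
  obtain rfl : c = fun a => ∫ x in (0:ℝ)..a, (1 - Dinv x) := funext hc
  refine ⟨hmarginal.convexOn_primitive, D, fun α hα => ⟨?_, rfl, rfl⟩⟩
  simpa only [hDinv α hα] using hmarginal.isMaxOn_sub_primitive (hDrange α hα)

/-- Contracting–pricing reduction. For a strictly decreasing continuous
demand curve `D : [0,1] → [0,1]` with inverse `Dinv`, the cost
`c(a) = ∫₀ᵃ (1 - Dinv x) dx` is convex, the agent's best response to the linear
contract keeping fraction `α` for the principal is exactly `D α`, and the
principal's utility `α · a(α)` equals the pricing revenue `α · D α`. -/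
theorem contracting_pricing_reduction
    (D Dinv : ℝ → ℝ)
    (hDanti : StrictAntiOn D (Set.Icc 0 1))
    (hDcont : ContinuousOn D (Set.Icc 0 1))
    (hDrange : ∀ p ∈ Set.Icc (0:ℝ) 1, D p ∈ Set.Icc (0:ℝ) 1)
    (hDinv : ∀ p ∈ Set.Icc (0:ℝ) 1, Dinv (D p) = p)
    (hDinvRange : ∀ x ∈ Set.Icc (0:ℝ) 1, Dinv x ∈ Set.Icc (0:ℝ) 1)
    (hDinvAnti : AntitoneOn Dinv (Set.Icc 0 1))
    (c : ℝ → ℝ) (hc : ∀ a, c a = ∫ x in (0:ℝ)..a, (1 - Dinv x)) :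
    ConvexOn ℝ (Set.Icc 0 1) c ∧
    ∃ A : ℝ → ℝ, ∀ α ∈ Set.Icc (0:ℝ) 1,
      IsMaxOn (fun a => (1 - α) * a - c a) (Set.Icc (0:ℝ) 1) (A α) ∧
      A α = D α ∧
      α * A α = α * D α :=
  contracting_pricing_reduction_general D Dinv hDrange hDinv hDinvAnti c hc
end

section
/- If $0 = \beta^{(0)} < \beta^{(1)} < \dots < \beta^{(i)}$ with $\beta^{(i)} \le \beta_{\max}$, and $|\hat r(a^{(j)}) - \hat r(a^{(j-1)})| \le 3\varepsilon$ for all $j \le i$, then the width of the cost confidence interval satisfies $c^{UCB}(a^{(i)}) - c^{LCB}(a^{(i)}) \le \sum_{j=1}^i (\beta^{(j)} - \beta^{(j-1)}) \cdot 3\varepsilon + 6\varepsilon \le 3\beta_{\max}\varepsilon + 6\varepsilon$. -/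
open Finset

theorem Finset.sum_Icc_one_sub_pred {M : Type*} [AddCommGroup M] (f : ℕ → M) (n : ℕ) :
    ∑ j ∈ Icc 1 n, (f j - f (j - 1)) = f n - f 0 := by
  induction n with
  | zero => simp
  | succ n ih =>
    rw [sum_Icc_succ_top (by omega), ih, Nat.add_sub_cancel]
    abel

theorem sub_pred_nonneg_of_mem_Icc {α : Type*} [AddCommGroup α] [PartialOrder α]
    [IsOrderedAddMonoid α] {f : ℕ → α} {n : ℕ} (hf : ∀ j < n, f j ≤ f (j + 1))
    {j : ℕ} (hj : j ∈ Icc 1 n) : 0 ≤ f j - f (j - 1) := by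
  obtain ⟨h1, h2⟩ := mem_Icc.mp hj
  obtain ⟨k, rfl⟩ := Nat.exists_eq_add_of_le' h1
  simpa using hf k (by omega)

/-- Width of the cost confidence interval. With strictly increasing
contracts `0 = β⁽⁰⁾ < … < β⁽ⁱ⁾ ≤ β_max` and `|r̂(a⁽ʲ⁾) - r̂(a⁽ʲ⁻¹⁾)| ≤ 3ε`,
`c^UCB - c^LCB ≤ ∑ⱼ (βⱼ - βⱼ₋₁) · 3ε + 6ε ≤ 3 β_max ε + 6ε`. -/
theorem cost_confidence_interval_width
    (β rhat : ℕ → ℝ) (βmax ε : ℝ) (hε : 0 ≤ ε) (i : ℕ)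
    (hβ0 : β 0 = 0) (hβmono : ∀ j < i, β j < β (j + 1)) (hβmax : β i ≤ βmax)
    (hrhat : ∀ j, 1 ≤ j → j ≤ i → |rhat j - rhat (j - 1)| ≤ 3 * ε) :
    ((∑ j ∈ Finset.Icc 1 i, β j * (rhat j - rhat (j - 1))) + 3 * ε)
        - ((∑ j ∈ Finset.Icc 1 i, β (j - 1) * (rhat j - rhat (j - 1))) - 3 * ε)
      ≤ (∑ j ∈ Finset.Icc 1 i, (β j - β (j - 1)) * (3 * ε)) + 6 * ε ∧
    (∑ j ∈ Finset.Icc 1 i, (β j - β (j - 1)) * (3 * ε)) + 6 * ε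
      ≤ 3 * βmax * ε + 6 * ε := by
  have hinc : ∀ j ∈ Icc 1 i, 0 ≤ β j - β (j - 1) :=
    fun j hj ↦ sub_pred_nonneg_of_mem_Icc (fun k hk ↦ (hβmono k hk).le) hj
  have hwidth : (∑ j ∈ Icc 1 i, β j * (rhat j - rhat (j - 1)))
      - ∑ j ∈ Icc 1 i, β (j - 1) * (rhat j - rhat (j - 1))
      ≤ ∑ j ∈ Icc 1 i, (β j - β (j - 1)) * (3 * ε) := by
    simp only [← sum_sub_distrib, ← sub_mul]
    refine sum_le_sum fun j hj ↦ mul_le_mul_of_nonneg_left ?_ (hinc j hj)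
    obtain ⟨h1, h2⟩ := mem_Icc.mp hj
    exact (le_abs_self _).trans (hrhat j h1 h2)
  have htelescope : ∑ j ∈ Icc 1 i, (β j - β (j - 1)) * (3 * ε) = β i * (3 * ε) := by
    rw [← sum_mul, sum_Icc_one_sub_pred, hβ0, sub_zero]
  refine ⟨by linarith, ?_⟩
  rw [htelescope]
  linarith [mul_le_mul_of_nonneg_right hβmax (by positivity : (0 : ℝ) ≤ 3 * ε)]
end
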